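/- Suppose that for every i ∈ {1,…,m} with min(p^X_i, p^Y_i) = e_1 one has p^X_i = p^Y_i. Then: if e_1 > e_2 (or the set S defining e_2 is empty), Case b1) holds; if e_1 = e_2, Case b2) holds. -/

import Mathlib

open MeasureTheory ProbabilityTheory Filter Finset Topology

noncomputable section

attribute [local instance] Classical.propDecidable

/-- The simplex `Λ` of probability vectors on `{1,…,m}`. -/
def Lam (m : ℕ) : Set (Fin m → ℝ) := {l | (∀ i, 0 ≤ l i) ∧ ∑ i, l i = 1}

/-- `f(λ^X, λ^Y) = Σ_i min (p^X_i λ^X_i) (p^Y_i λ^Y_i)`. -/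
def fobj {m : ℕ} (pX pY : Fin m → ℝ) (l : (Fin m → ℝ) × (Fin m → ℝ)) : ℝ :=
  ∑ i, min (pX i * l.1 i) (pY i * l.2 i)

/-- `e_max`, the maximum of `f` over `Λ²`. -/
def emax {m : ℕ} (pX pY : Fin m → ℝ) : ℝ :=
  sSup (fobj pX pY '' (Lam m ×ˢ Lam m))

/-- The set `U`. -/
def Uset {m : ℕ} (pX pY : Fin m → ℝ) : Set (Fin m → ℝ) :=
  {u | (∀ i, 0 ≤ u i) ∧ (∑ i, u i / pX i) ≤ 1 ∧ (∑ i, u i / pY i) ≤ 1}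

/-- The set `L_U` of maximizers of `φ(u) = Σ_i u_i` over `U`. -/
def LU {m : ℕ} (pX pY : Fin m → ℝ) : Set (Fin m → ℝ) :=
  {u ∈ Uset pX pY | ∑ i, u i = emax pX pY}

/-- The set `I` of letters usable in a maximizer. -/
def Iset {m : ℕ} (pX pY : Fin m → ℝ) : Set (Fin m) :=
  {i | ∃ u ∈ LU pX pY, 0 < u i}

/-- Case a): some maximizer saturates the `X` constraint but not the `Y` one. -/
def CaseA {m : ℕ} (pX pY : Fin m → ℝ) : Prop :=
  ∃ u ∈ LU pX pY, (∑ i, u i / pX i) = 1 ∧ (∑ i, u i / pY i) < 1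

/-- Case b): every maximizer saturates both constraints. -/
def CaseB {m : ℕ} (pX pY : Fin m → ℝ) : Prop :=
  ∀ u ∈ LU pX pY, (∑ i, u i / pX i) = 1 ∧ (∑ i, u i / pY i) = 1

/-- Case b1): Case b) and the vectors `(1/p^X_i)_{i∈I}` and `(1/p^Y_i)_{i∈I}` coincide. -/
def CaseB1 {m : ℕ} (pX pY : Fin m → ℝ) : Prop :=
  CaseB pX pY ∧ ∀ i ∈ Iset pX pY, (pX i)⁻¹ = (pY i)⁻¹

/-- Case b2): Case b) and the vectors `(1/p^X_i)_{i∈I}` and `(1/p^Y_i)_{i∈I}` differ. -/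
def CaseB2 {m : ℕ} (pX pY : Fin m → ℝ) : Prop :=
  CaseB pX pY ∧ ¬ (∀ i ∈ Iset pX pY, (pX i)⁻¹ = (pY i)⁻¹)

/-- The set `K_{Λ²}` of maximizers of `f` over `Λ²`. -/
def Kset {m : ℕ} (pX pY : Fin m → ℝ) : Set ((Fin m → ℝ) × (Fin m → ℝ)) :=
  {l ∈ Lam m ×ˢ Lam m | fobj pX pY l = emax pX pY}

/-- `p^X_max`. -/
def pXmax {m : ℕ} (pX : Fin m → ℝ) : ℝ := ⨆ i, pX i

/-- The set `J` (Case a)). -/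
def Jset {m : ℕ} (pX pY : Fin m → ℝ) : Set (Fin m → ℝ) :=
  {l ∈ Lam m | (∀ i ∉ Iset pX pY, l i = 0) ∧
    (∑ i ∈ Finset.univ.filter (· ∈ Iset pX pY), l i / pY i) ≤ 1 / pXmax pX}

/-- `E = {x : Σ_i x_i = 0}`. -/
def Eset (m : ℕ) : Set (Fin m → ℝ) := {x | ∑ i, x i = 0}

/-- `E' = {x ∈ E : x_i ≥ 0 for i ∉ I}`. -/
def E'set {m : ℕ} (pX pY : Fin m → ℝ) : Set (Fin m → ℝ) :=
  {x ∈ Eset m | ∀ i ∉ Iset pX pY, 0 ≤ x i}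

/-- The function `𝔪` of Lemma 1.4. -/
def mfrak {m : ℕ} (pX pY : Fin m → ℝ) (ν : (Fin m → ℝ) × (Fin m → ℝ)) : ℝ :=
  sSup ((fun x : (Fin m → ℝ) × (Fin m → ℝ) =>
      ∑ i, min (pX i * x.1 i + ν.1 i) (pY i * x.2 i + ν.2 i)) ''
    (E'set pX pY ×ˢ E'set pX pY))

/-- Partial sum `λ_1 + … + λ_i`. -/
def psumLe {m : ℕ} (l : Fin m → ℝ) (i : Fin m) : ℝ :=
  ∑ j ∈ Finset.univ.filter (· ≤ i), l j

/-- Partial sum `λ_1 + … + λ_{i-1}`. -/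
def psumLt {m : ℕ} (l : Fin m → ℝ) (i : Fin m) : ℝ :=
  ∑ j ∈ Finset.univ.filter (· < i), l j

/-- `e(i,j)`. -/
def eij {m : ℕ} (pX pY : Fin m → ℝ) (i j : Fin m) : ℝ :=
  (pX i * pY i * (pX j - pY j) + pX j * pY j * (pY i - pX i)) /
    (pY i * pX j - pX i * pY j)

/-- The set `S` of admissible pairs `(i,j)` in the representation of `e_max`. -/
def Sset {m : ℕ} (pX pY : Fin m → ℝ) : Set (Fin m × Fin m) :=
  {ij | pX ij.1 < pX ij.2 ∧ pY ij.2 < pY ij.1 ∧ pX ij.1 < pY ij.1 ∧ pY ij.2 < pX ij.2}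

/-- `e_1 = max_i min(p^X_i, p^Y_i)`. -/
def e1 {m : ℕ} (pX pY : Fin m → ℝ) : ℝ := ⨆ i, min (pX i) (pY i)

/-- `e_2 = max_{(i,j)∈S} e(i,j)` (with `sSup ∅ = 0` when `S` is empty). -/
def e2 {m : ℕ} (pX pY : Fin m → ℝ) : ℝ :=
  sSup ((fun ij : Fin m × Fin m => eij pX pY ij.1 ij.2) '' Sset pX pY)

/-!
`e_max` is the value of the linear program `max ∑ u_i` over `U`; its dual asks for `α, β ≥ 0`
with `α / p^X_k + β / p^Y_k ≥ 1` for all `k`, and any such pair bounds `f` on `Λ²` by `α + β`.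
With `β = e_1 - α`, a letter with `p^X_k < p^Y_k` (resp. `p^Y_k < p^X_k`) bounds `α` from below
(resp. above) by `dualThreshold`. The hypothesis on the letters achieving `e_1` puts every lower
bound below `e_1` and every upper bound above `0`, and a lower bound from `i` fits under an upper
bound from `j` iff `e(i, j) ≤ e_1`, which can fail only for `(i, j) ∈ S`. So `e_2 ≤ e_1` gives a
dual solution with `α, β > 0` of value `e_1 = f(δ_i, δ_i)`, hence `e_max = e_1`, and
complementary slackness makes every maximiser saturate both constraints. If `e_2 < e_1` the dual
solution can be taken strictly feasible at each letter with `p^X_k ≠ p^Y_k`, so these letters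
vanish in every maximiser; if `e_1 = e_2`, the maximiser supported on a pair of `S` attaining
`e_2` uses a letter with `p^X_i < p^Y_i`.
-/

theorem exists_mem_Ioo_forall_le_forall_le {ι : Type*} [Finite ι] [Nonempty ι] {a b : ι → ℝ}
    {lo hi : ℝ} (hlohi : lo < hi) (ha : ∀ i, a i < hi) (hb : ∀ j, lo < b j)
    (hab : ∀ i j, a i ≤ b j) :
    ∃ x ∈ Set.Ioo lo hi, (∀ i, a i ≤ x) ∧ ∀ j, x ≤ b j := by
  obtain ⟨i₀, hi₀⟩ := Finite.exists_max a
  obtain ⟨j₀, hj₀⟩ := Finite.exists_min b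
  have hLH : max lo (a i₀) ≤ min hi (b j₀) :=
    max_le (le_min hlohi.le (hb j₀).le) (le_min (ha i₀).le (hab i₀ j₀))
  have hL : max lo (a i₀) < hi := max_lt hlohi (ha i₀)
  have hH : lo < min hi (b j₀) := lt_min hlohi (hb j₀)
  have := le_max_left lo (a i₀); have := le_max_right lo (a i₀)
  have := min_le_left hi (b j₀); have := min_le_right hi (b j₀)
  exact ⟨(max lo (a i₀) + min hi (b j₀)) / 2, ⟨by linarith, by linarith⟩,
    fun i => by linarith [hi₀ i], fun j => by linarith [hj₀ j]⟩

theorem exists_mem_Ioo_forall_lt_forall_lt {ι : Type*} [Finite ι] [Nonempty ι] {a b : ι → ℝ}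
    {lo hi : ℝ} (hlohi : lo < hi) (ha : ∀ i, a i < hi) (hb : ∀ j, lo < b j)
    (hab : ∀ i j, a i < b j) :
    ∃ x ∈ Set.Ioo lo hi, (∀ i, a i < x) ∧ ∀ j, x < b j := by
  obtain ⟨i₀, hi₀⟩ := Finite.exists_max a
  obtain ⟨j₀, hj₀⟩ := Finite.exists_min b
  have hLH : max lo (a i₀) < min hi (b j₀) :=
    max_lt (lt_min hlohi (hb j₀)) (lt_min (ha i₀) (hab i₀ j₀))
  have := le_max_left lo (a i₀); have := le_max_right lo (a i₀)
  have := min_le_left hi (b j₀); have := min_le_right hi (b j₀)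
  exact ⟨(max lo (a i₀) + min hi (b j₀)) / 2, ⟨by linarith, by linarith⟩,
    fun i => by linarith [hi₀ i], fun j => by linarith [hj₀ j]⟩

/-- With `β = e - α`, the dual constraint `1 ≤ α / p + β / q` of a letter with `p ≠ q` says that
`α` lies on one side of this value. -/
def dualThreshold (p q e : ℝ) : ℝ := p * (q - e) / (q - p)

section DualThreshold

variable {p q e α : ℝ}

theorem one_le_div_add_div_iff (hp : 0 < p) (hq : 0 < q) :
    1 ≤ α / p + (e - α) / q ↔ p * (q - e) ≤ α * (q - p) := by
  rw [div_add_div _ _ hp.ne' hq.ne', one_le_div (mul_pos hp hq)]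
  constructor <;> intro h <;> linarith

theorem one_lt_div_add_div_iff (hp : 0 < p) (hq : 0 < q) :
    1 < α / p + (e - α) / q ↔ p * (q - e) < α * (q - p) := by
  rw [div_add_div _ _ hp.ne' hq.ne', one_lt_div (mul_pos hp hq)]
  constructor <;> intro h <;> linarith

theorem dualThreshold_le_iff (hp : 0 < p) (hq : 0 < q) (hpq : p < q) :
    dualThreshold p q e ≤ α ↔ 1 ≤ α / p + (e - α) / q := by
  rw [dualThreshold, div_le_iff₀ (sub_pos.2 hpq), one_le_div_add_div_iff hp hq]

theorem dualThreshold_lt_iff (hp : 0 < p) (hq : 0 < q) (hpq : p < q) :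
    dualThreshold p q e < α ↔ 1 < α / p + (e - α) / q := by
  rw [dualThreshold, div_lt_iff₀ (sub_pos.2 hpq), one_lt_div_add_div_iff hp hq]

theorem le_dualThreshold_iff (hp : 0 < p) (hq : 0 < q) (hqp : q < p) :
    α ≤ dualThreshold p q e ↔ 1 ≤ α / p + (e - α) / q := by
  rw [dualThreshold, le_div_iff_of_neg (sub_neg.2 hqp), one_le_div_add_div_iff hp hq]

theorem lt_dualThreshold_iff (hp : 0 < p) (hq : 0 < q) (hqp : q < p) :
    α < dualThreshold p q e ↔ 1 < α / p + (e - α) / q := by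
  rw [dualThreshold, lt_div_iff_of_neg (sub_neg.2 hqp), one_lt_div_add_div_iff hp hq]

theorem dualThreshold_lt_self (hq : 0 < q) (hpq : p < q) (hpe : p < e) :
    dualThreshold p q e < e := by
  rw [dualThreshold, div_lt_iff₀ (sub_pos.2 hpq)]
  nlinarith

theorem self_le_dualThreshold (hq : 0 < q) (hqp : q < p) (hpe : p ≤ e) :
    e ≤ dualThreshold p q e := by
  rw [dualThreshold, le_div_iff_of_neg (sub_neg.2 hqp)]
  nlinarith

theorem dualThreshold_pos (hp : 0 < p) (hqp : q < p) (hqe : q < e) : 0 < dualThreshold p q e :=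
  div_pos_of_neg_of_neg (mul_neg_of_pos_of_neg hp (sub_neg.2 hqe)) (sub_neg.2 hqp)

theorem dualThreshold_nonpos (hp : 0 < p) (hpq : p < q) (hqe : q ≤ e) :
    dualThreshold p q e ≤ 0 :=
  div_nonpos_of_nonpos_of_nonneg (mul_nonpos_of_nonneg_of_nonpos hp.le (sub_nonpos.2 hqe))
    (sub_nonneg.2 hpq.le)

theorem min_mul_le_mul_add_mul {x y β : ℝ} (hp : 0 < p) (hq : 0 < q) (hx : 0 ≤ x)
    (hy : 0 ≤ y) (hα : 0 ≤ α) (hβ : 0 ≤ β) (hd : 1 ≤ α / p + β / q) :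
    min (p * x) (q * y) ≤ α * x + β * y := by
  set c := min (p * x) (q * y)
  have hc : 0 ≤ c := le_min (mul_nonneg hp.le hx) (mul_nonneg hq.le hy)
  have hcx : c / p ≤ x := (div_le_iff₀' hp).2 (min_le_left _ _)
  have hcy : c / q ≤ y := (div_le_iff₀' hq).2 (min_le_right _ _)
  calc c ≤ c * (α / p + β / q) := le_mul_of_one_le_right hc hd
    _ = α * (c / p) + β * (c / q) := by ring
    _ ≤ α * x + β * y :=
      add_le_add (mul_le_mul_of_nonneg_left hcx hα) (mul_le_mul_of_nonneg_left hcy hβ)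

end DualThreshold

section Criterion

variable {m : ℕ} {pX pY : Fin m → ℝ} {α β : ℝ} {i j : Fin m}

theorem min_le_e1 (i : Fin m) : min (pX i) (pY i) ≤ e1 pX pY :=
  le_ciSup (f := fun i => min (pX i) (pY i)) (Finite.bddAbove_range _) i

theorem exists_min_eq_e1 [NeZero m] : ∃ i, min (pX i) (pY i) = e1 pX pY :=
  exists_eq_ciSup_of_finite

theorem e1_pos [NeZero m] (hpX : ∀ i, 0 < pX i) (hpY : ∀ i, 0 < pY i) : 0 < e1 pX pY := by
  obtain ⟨i, hi⟩ := exists_min_eq_e1 (pX := pX) (pY := pY)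
  exact hi ▸ lt_min (hpX i) (hpY i)

theorem pX_lt_e1 (hsym : ∀ i, min (pX i) (pY i) = e1 pX pY → pX i = pY i)
    (hi : pX i < pY i) : pX i < e1 pX pY := by
  have hle := min_eq_left hi.le ▸ min_le_e1 (pX := pX) (pY := pY) i
  exact hle.lt_of_ne fun h => hi.ne (hsym i (by rw [min_eq_left hi.le, h]))

theorem pY_lt_e1 (hsym : ∀ i, min (pX i) (pY i) = e1 pX pY → pX i = pY i)
    (hj : pY j < pX j) : pY j < e1 pX pY := by
  have hle := min_eq_right hj.le ▸ min_le_e1 (pX := pX) (pY := pY) j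
  exact hle.lt_of_ne fun h => hj.ne' (hsym j (by rw [min_eq_right hj.le, h]))

theorem single_mem_Lam (i : Fin m) : Pi.single i 1 ∈ Lam m :=
  ⟨fun j => by rw [Pi.single_apply]; split_ifs <;> norm_num, by simp⟩

theorem fobj_single_single (i : Fin m) :
    fobj pX pY (Pi.single i 1, Pi.single i 1) = min (pX i) (pY i) := by
  rw [fobj, Fintype.sum_eq_single i fun k hk => by simp [hk]]
  simp

theorem fobj_le_of_dual (hpX : ∀ i, 0 < pX i) (hpY : ∀ i, 0 < pY i) (hα : 0 ≤ α) (hβ : 0 ≤ β)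
    (hd : ∀ k, 1 ≤ α / pX k + β / pY k) {l : (Fin m → ℝ) × (Fin m → ℝ)}
    (hl : l ∈ Lam m ×ˢ Lam m) : fobj pX pY l ≤ α + β := by
  obtain ⟨⟨hl₁, hs₁⟩, hl₂, hs₂⟩ := hl
  calc fobj pX pY l ≤ ∑ k, (α * l.1 k + β * l.2 k) := Finset.sum_le_sum fun k _ =>
        min_mul_le_mul_add_mul (hpX k) (hpY k) (hl₁ k) (hl₂ k) hα hβ (hd k)
    _ = α + β := by
        rw [Finset.sum_add_distrib, ← Finset.mul_sum, ← Finset.mul_sum, hs₁, hs₂, mul_one,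
          mul_one]

theorem emax_eq_e1_of_dual [NeZero m] (hpX : ∀ i, 0 < pX i) (hpY : ∀ i, 0 < pY i)
    (hα : 0 ≤ α) (hβ : 0 ≤ β) (hd : ∀ k, 1 ≤ α / pX k + β / pY k) (hαβ : α + β = e1 pX pY) :
    emax pX pY = e1 pX pY := by
  obtain ⟨i, hi⟩ := exists_min_eq_e1 (pX := pX) (pY := pY)
  refine IsGreatest.csSup_eq
    ⟨⟨_, ⟨single_mem_Lam i, single_mem_Lam i⟩, (fobj_single_single i).trans hi⟩, ?_⟩
  rintro _ ⟨l, hl, rfl⟩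
  exact hαβ ▸ fobj_le_of_dual hpX hpY hα hβ hd hl

theorem complementary_slackness (hα : 0 ≤ α) (hβ : 0 ≤ β) (hd : ∀ k, 1 ≤ α / pX k + β / pY k)
    (hemax : emax pX pY = α + β) {u : Fin m → ℝ} (hu : u ∈ LU pX pY) :
    (∀ k, u k * (α / pX k + β / pY k - 1) = 0) ∧
      α * (1 - ∑ k, u k / pX k) = 0 ∧ β * (1 - ∑ k, u k / pY k) = 0 := by
  obtain ⟨⟨hu0, hX, hY⟩, hsum⟩ := hu
  have hterm : ∀ k, 0 ≤ u k * (α / pX k + β / pY k - 1) :=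
    fun k => mul_nonneg (hu0 k) (sub_nonneg.2 (hd k))
  have hX' : 0 ≤ α * (1 - ∑ k, u k / pX k) := mul_nonneg hα (sub_nonneg.2 hX)
  have hY' : 0 ≤ β * (1 - ∑ k, u k / pY k) := mul_nonneg hβ (sub_nonneg.2 hY)
  -- the three nonnegative slacks add up to `α + β - ∑ k, u k = 0`
  have hgap : ∑ k, u k * (α / pX k + β / pY k - 1) =
      α * ∑ k, u k / pX k + β * ∑ k, u k / pY k - ∑ k, u k := by
    simp only [Finset.mul_sum, ← Finset.sum_add_distrib, ← Finset.sum_sub_distrib]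
    exact Finset.sum_congr rfl fun k _ => by ring
  have hterms : ∑ k, u k * (α / pX k + β / pY k - 1) = 0 := by
    linarith [Finset.sum_nonneg fun k (_ : k ∈ Finset.univ) => hterm k]
  exact ⟨fun k => (Finset.sum_eq_zero_iff_of_nonneg fun k _ => hterm k).1 hterms k
    (Finset.mem_univ k), by linarith, by linarith⟩

theorem caseB_of_dual (hα : 0 < α) (hβ : 0 < β) (hd : ∀ k, 1 ≤ α / pX k + β / pY k)
    (hemax : emax pX pY = α + β) : CaseB pX pY := by
  intro u hu
  obtain ⟨-, hX, hY⟩ := complementary_slackness hα.le hβ.le hd hemax hu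
  rw [mul_eq_zero, sub_eq_zero] at hX hY
  exact ⟨(hX.resolve_left hα.ne').symm, (hY.resolve_left hβ.ne').symm⟩

theorem eq_of_mem_Iset_of_dual (hα : 0 ≤ α) (hβ : 0 ≤ β) (hd : ∀ k, 1 ≤ α / pX k + β / pY k)
    (hemax : emax pX pY = α + β) (hstrict : ∀ k, pX k ≠ pY k → 1 < α / pX k + β / pY k)
    (hi : i ∈ Iset pX pY) : pX i = pY i := by
  obtain ⟨u, hu, hui⟩ := hi
  by_contra hne
  exact (mul_pos hui (sub_pos.2 (hstrict i hne))).ne'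
    ((complementary_slackness hα hβ hd hemax hu).1 i)

theorem mem_Iset_of_mem_Sset (hpX : ∀ i, 0 < pX i) (hpY : ∀ i, 0 < pY i)
    (hij : (i, j) ∈ Sset pX pY) (he : eij pX pY i j = emax pX pY) : i ∈ Iset pX pY := by
  obtain ⟨hXX, -, hXY, hYX⟩ := hij
  have hne : i ≠ j := fun h => hXX.ne (congrArg pX h)
  have hD : 0 < pY i * pX j - pX i * pY j := by nlinarith [hpX i, hpY j]
  -- `(a, b)` solves `a / p i + b / p j = 1` for both `p = pX` and `p = pY`
  set a := pX i * pY i * (pX j - pY j) / (pY i * pX j - pX i * pY j)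
  set b := pX j * pY j * (pY i - pX i) / (pY i * pX j - pX i * pY j)
  have ha : 0 < a := div_pos (mul_pos (mul_pos (hpX i) (hpY i)) (sub_pos.2 hYX)) hD
  have hb : 0 < b := div_pos (mul_pos (mul_pos (hpX j) (hpY j)) (sub_pos.2 hXY)) hD
  set u : Fin m → ℝ := Pi.single i a + Pi.single j b
  have hsum : ∀ q : Fin m → ℝ, ∑ k, u k / q k = a / q i + b / q j := fun q => by
    rw [Fintype.sum_eq_add i j hne fun k hk => by simp [u, hk.1, hk.2]]
    simp [u, hne, hne.symm]
  have := (hpX i).ne'; have := (hpX j).ne'; have := (hpY i).ne'; have := (hpY j).ne'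
  have hX : a / pX i + b / pX j = 1 := by simp only [a, b]; field_simp; ring
  have hY : a / pY i + b / pY j = 1 := by simp only [a, b]; field_simp; ring
  refine ⟨u, ⟨⟨fun k => ?_, (hsum pX).trans_le hX.le, (hsum pY).trans_le hY.le⟩, ?_⟩, ?_⟩
  · exact add_nonneg (by rw [Pi.single_apply]; split_ifs <;> linarith)
      (by rw [Pi.single_apply]; split_ifs <;> linarith)
  · rw [← he, eij, add_div]
    simpa using hsum 1
  · simpa [u, hne] using ha

theorem one_le_div_add_div_of_eq (hpX : ∀ i, 0 < pX i) {k : Fin m} (hk : pX k = pY k) :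
    1 ≤ α / pX k + (e1 pX pY - α) / pY k := by
  rw [one_le_div_add_div_iff (hpX k) (hk ▸ hpX k), hk, sub_self, mul_zero]
  exact mul_nonpos_of_nonneg_of_nonpos (hk ▸ hpX k).le
    (sub_nonpos.2 (by simpa [hk] using min_le_e1 (pX := pX) (pY := pY) k))

theorem exists_pos_dualThreshold_sub_eq (hpX : ∀ i, 0 < pX i) (hpY : ∀ i, 0 < pY i)
    (hi : pX i < pY i) (hj : pY j < pX j) (e : ℝ) :
    ∃ c > 0, dualThreshold (pX j) (pY j) e - dualThreshold (pX i) (pY i) e =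
      (e - eij pX pY i j) * c := by
  have hD : 0 < pY i * pX j - pX i * pY j := by nlinarith [hpX i, hpY j]
  have hi' := sub_pos.2 hi
  have hj' := sub_pos.2 hj
  refine ⟨(pY i * pX j - pX i * pY j) / ((pY i - pX i) * (pX j - pY j)), by positivity, ?_⟩
  have hN : eij pX pY i j * (pY i * pX j - pX i * pY j) =
      pX i * pY i * (pX j - pY j) + pX j * pY j * (pY i - pX i) := div_mul_cancel₀ _ hD.ne'
  rw [← mul_div_assoc, sub_mul, hN, dualThreshold, dualThreshold,
    div_sub_div _ _ (sub_neg.2 hj).ne hi'.ne',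
    div_eq_div_iff (mul_ne_zero (sub_neg.2 hj).ne hi'.ne') (by positivity)]
  ring

theorem dualThreshold_le_dualThreshold_iff (hpX : ∀ i, 0 < pX i) (hpY : ∀ i, 0 < pY i)
    (hi : pX i < pY i) (hj : pY j < pX j) {e : ℝ} :
    dualThreshold (pX i) (pY i) e ≤ dualThreshold (pX j) (pY j) e ↔ eij pX pY i j ≤ e := by
  obtain ⟨c, hc, h⟩ := exists_pos_dualThreshold_sub_eq hpX hpY hi hj e
  rw [← sub_nonneg, h, mul_nonneg_iff_of_pos_right hc, sub_nonneg]

theorem dualThreshold_lt_dualThreshold_iff (hpX : ∀ i, 0 < pX i) (hpY : ∀ i, 0 < pY i)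
    (hi : pX i < pY i) (hj : pY j < pX j) {e : ℝ} :
    dualThreshold (pX i) (pY i) e < dualThreshold (pX j) (pY j) e ↔ eij pX pY i j < e := by
  obtain ⟨c, hc, h⟩ := exists_pos_dualThreshold_sub_eq hpX hpY hi hj e
  rw [← sub_pos, h, mul_pos_iff_of_pos_right hc, sub_pos]

theorem mem_Sset_or_dualThreshold_lt (hpX : ∀ i, 0 < pX i) (hpY : ∀ i, 0 < pY i) {e : ℝ}
    (hi : pX i < pY i) (hj : pY j < pX j) (hie : pX i < e) (hje : pY j < e) :
    (i, j) ∈ Sset pX pY ∨ dualThreshold (pX i) (pY i) e < dualThreshold (pX j) (pY j) e := by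
  by_cases hYi : e < pY i
  · by_cases hXj : e < pX j
    · exact Or.inl ⟨hie.trans hXj, hje.trans hYi, hi, hj⟩
    · exact Or.inr ((dualThreshold_lt_self (hpY i) hi hie).trans_le
        (self_le_dualThreshold (hpY j) hj (not_lt.1 hXj)))
  · exact Or.inr ((dualThreshold_nonpos (hpX i) hi (not_lt.1 hYi)).trans_lt
      (dualThreshold_pos (hpX j) hj hje))

/-- The bound `dualThreshold ≤ α` from a letter with `p^X_i < p^Y_i`; other letters contribute
the constraint `0 < α`. -/
def dualLowerBound (pX pY : Fin m → ℝ) (i : Fin m) : ℝ :=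
  if pX i < pY i then dualThreshold (pX i) (pY i) (e1 pX pY) else 0

/-- The bound `α ≤ dualThreshold` from a letter with `p^Y_j < p^X_j`; other letters contribute
the constraint `α < e_1`. -/
def dualUpperBound (pX pY : Fin m → ℝ) (j : Fin m) : ℝ :=
  if pY j < pX j then dualThreshold (pX j) (pY j) (e1 pX pY) else e1 pX pY

theorem dualLowerBound_le_dualUpperBound_iff (hpX : ∀ i, 0 < pX i) (hpY : ∀ i, 0 < pY i)
    (hij : (i, j) ∈ Sset pX pY) :
    dualLowerBound pX pY i ≤ dualUpperBound pX pY j ↔ eij pX pY i j ≤ e1 pX pY := by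
  rw [dualLowerBound, dualUpperBound, if_pos hij.2.2.1, if_pos hij.2.2.2,
    dualThreshold_le_dualThreshold_iff hpX hpY hij.2.2.1 hij.2.2.2]

theorem dualLowerBound_lt_dualUpperBound_iff (hpX : ∀ i, 0 < pX i) (hpY : ∀ i, 0 < pY i)
    (hij : (i, j) ∈ Sset pX pY) :
    dualLowerBound pX pY i < dualUpperBound pX pY j ↔ eij pX pY i j < e1 pX pY := by
  rw [dualLowerBound, dualUpperBound, if_pos hij.2.2.1, if_pos hij.2.2.2,
    dualThreshold_lt_dualThreshold_iff hpX hpY hij.2.2.1 hij.2.2.2]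

theorem one_le_div_add_div_of_dualBounds (hpX : ∀ i, 0 < pX i) (hpY : ∀ i, 0 < pY i)
    {k : Fin m} (hlow : dualLowerBound pX pY k ≤ α) (hup : α ≤ dualUpperBound pX pY k) :
    1 ≤ α / pX k + (e1 pX pY - α) / pY k := by
  rcases lt_trichotomy (pX k) (pY k) with hk | hk | hk
  · rw [dualLowerBound, if_pos hk] at hlow
    exact (dualThreshold_le_iff (hpX k) (hpY k) hk).1 hlow
  · exact one_le_div_add_div_of_eq hpX hk
  · rw [dualUpperBound, if_pos hk] at hup
    exact (le_dualThreshold_iff (hpX k) (hpY k) hk).1 hup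

theorem one_lt_div_add_div_of_dualBounds (hpX : ∀ i, 0 < pX i) (hpY : ∀ i, 0 < pY i)
    {k : Fin m} (hk : pX k ≠ pY k) (hlow : dualLowerBound pX pY k < α)
    (hup : α < dualUpperBound pX pY k) :
    1 < α / pX k + (e1 pX pY - α) / pY k := by
  rcases hk.lt_or_gt with hk | hk
  · rw [dualLowerBound, if_pos hk] at hlow
    exact (dualThreshold_lt_iff (hpX k) (hpY k) hk).1 hlow
  · rw [dualUpperBound, if_pos hk] at hup
    exact (lt_dualThreshold_iff (hpX k) (hpY k) hk).1 hup

section DualCertificate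

variable [NeZero m] (hpX : ∀ i, 0 < pX i) (hpY : ∀ i, 0 < pY i)
  (hsym : ∀ i, min (pX i) (pY i) = e1 pX pY → pX i = pY i)
include hpX hpY hsym

theorem dualLowerBound_lt_e1 (i : Fin m) : dualLowerBound pX pY i < e1 pX pY := by
  unfold dualLowerBound
  split_ifs with hi
  exacts [dualThreshold_lt_self (hpY i) hi (pX_lt_e1 hsym hi), e1_pos hpX hpY]

theorem dualUpperBound_pos (j : Fin m) : 0 < dualUpperBound pX pY j := by
  unfold dualUpperBound
  split_ifs with hj
  exacts [dualThreshold_pos (hpX j) hj (pY_lt_e1 hsym hj), e1_pos hpX hpY]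

theorem dualLowerBound_lt_dualUpperBound_or_mem_Sset (i j : Fin m) :
    dualLowerBound pX pY i < dualUpperBound pX pY j ∨ (i, j) ∈ Sset pX pY := by
  by_cases hi : pX i < pY i
  · by_cases hj : pY j < pX j
    · simp only [dualLowerBound, dualUpperBound, if_pos hi, if_pos hj]
      exact (mem_Sset_or_dualThreshold_lt hpX hpY hi hj (pX_lt_e1 hsym hi)
        (pY_lt_e1 hsym hj)).symm
    · simp only [dualUpperBound, if_neg hj]
      exact Or.inl (dualLowerBound_lt_e1 hpX hpY hsym i)
  · simp only [dualLowerBound, if_neg hi]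
    exact Or.inl (dualUpperBound_pos hpX hpY hsym j)

theorem exists_dual_certificate (hS : ∀ ij ∈ Sset pX pY, eij pX pY ij.1 ij.2 ≤ e1 pX pY) :
    ∃ α β, 0 < α ∧ 0 < β ∧ α + β = e1 pX pY ∧ ∀ k, 1 ≤ α / pX k + β / pY k := by
  obtain ⟨α, ⟨hα0, hαe⟩, hlow, hup⟩ := exists_mem_Ioo_forall_le_forall_le (e1_pos hpX hpY)
    (dualLowerBound_lt_e1 hpX hpY hsym) (dualUpperBound_pos hpX hpY hsym) fun i j =>
      (dualLowerBound_lt_dualUpperBound_or_mem_Sset hpX hpY hsym i j).elim le_of_lt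
        fun hij => (dualLowerBound_le_dualUpperBound_iff hpX hpY hij).2 (hS _ hij)
  exact ⟨α, _, hα0, sub_pos.2 hαe, add_sub_cancel α _,
    fun k => one_le_div_add_div_of_dualBounds hpX hpY (hlow k) (hup k)⟩

theorem exists_strict_dual_certificate
    (hS : ∀ ij ∈ Sset pX pY, eij pX pY ij.1 ij.2 < e1 pX pY) :
    ∃ α β, 0 < α ∧ 0 < β ∧ α + β = e1 pX pY ∧ (∀ k, 1 ≤ α / pX k + β / pY k) ∧
      ∀ k, pX k ≠ pY k → 1 < α / pX k + β / pY k := by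
  obtain ⟨α, ⟨hα0, hαe⟩, hlow, hup⟩ := exists_mem_Ioo_forall_lt_forall_lt (e1_pos hpX hpY)
    (dualLowerBound_lt_e1 hpX hpY hsym) (dualUpperBound_pos hpX hpY hsym) fun i j =>
      (dualLowerBound_lt_dualUpperBound_or_mem_Sset hpX hpY hsym i j).elim id
        fun hij => (dualLowerBound_lt_dualUpperBound_iff hpX hpY hij).2 (hS _ hij)
  exact ⟨α, _, hα0, sub_pos.2 hαe, add_sub_cancel α _,
    fun k => one_le_div_add_div_of_dualBounds hpX hpY (hlow k).le (hup k).le,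
    fun k hk => one_lt_div_add_div_of_dualBounds hpX hpY hk (hlow k) (hup k)⟩

end DualCertificate

end Criterion

theorem criterion_sym_general
    (m : ℕ) (hm : 2 ≤ m)
    (pX pY : Fin m → ℝ)
    (hpX : ∀ i, 0 < pX i) (hpY : ∀ i, 0 < pY i)
    (hsym : ∀ i, min (pX i) (pY i) = e1 pX pY → pX i = pY i) :
    ((Sset pX pY = ∅ ∨ e2 pX pY < e1 pX pY) → CaseB1 pX pY) ∧
      ((Sset pX pY).Nonempty → e1 pX pY = e2 pX pY → CaseB2 pX pY) := by
  have : NeZero m := ⟨by omega⟩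
  have hfin : ((fun ij : Fin m × Fin m => eij pX pY ij.1 ij.2) '' Sset pX pY).Finite :=
    (Set.toFinite _).image _
  refine ⟨fun h => ?_, fun hSne he => ?_⟩
  · have hS : ∀ ij ∈ Sset pX pY, eij pX pY ij.1 ij.2 < e1 pX pY := fun ij hij => by
      rcases h with h | h
      · simp [h] at hij
      · exact (le_csSup hfin.bddAbove (Set.mem_image_of_mem _ hij)).trans_lt h
    obtain ⟨α, β, hα, hβ, hαβ, hd, hstrict⟩ := exists_strict_dual_certificate hpX hpY hsym hS
    have hemax := (emax_eq_e1_of_dual hpX hpY hα.le hβ.le hd hαβ).trans hαβ.symm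
    exact ⟨caseB_of_dual hα hβ hd hemax, fun i hi => by
      rw [eq_of_mem_Iset_of_dual hα.le hβ.le hd hemax hstrict hi]⟩
  · obtain ⟨⟨i, j⟩, hij, hije⟩ := (hSne.image _).csSup_mem hfin
    obtain ⟨α, β, hα, hβ, hαβ, hd⟩ := exists_dual_certificate hpX hpY hsym fun ij hij =>
      he ▸ le_csSup hfin.bddAbove (Set.mem_image_of_mem _ hij)
    have hemax := emax_eq_e1_of_dual hpX hpY hα.le hβ.le hd hαβ
    have hiI : i ∈ Iset pX pY :=
      mem_Iset_of_mem_Sset hpX hpY hij (hije.trans (he.symm.trans hemax.symm))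
    exact ⟨caseB_of_dual hα hβ hd (hemax.trans hαβ.symm),
      fun hI => hij.2.2.1.ne (inv_injective (hI i hiI))⟩

/-- Criterion: if every `i` with `min(p^X_i, p^Y_i) = e_1` satisfies `p^X_i = p^Y_i`, then
`e_1 > e_2` (or `S = ∅`) implies Case b1), and `e_1 = e_2` (with `S` nonempty) implies
Case b2). -/
theorem criterion_sym
    (m : ℕ) (hm : 2 ≤ m)
    (pX pY : Fin m → ℝ)
    (hpX : ∀ i, 0 < pX i) (hpY : ∀ i, 0 < pY i)
    (hpXsum : ∑ i, pX i = 1) (hpYsum : ∑ i, pY i = 1)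
    (hsym : ∀ i, min (pX i) (pY i) = e1 pX pY → pX i = pY i) :
    ((Sset pX pY = ∅ ∨ e2 pX pY < e1 pX pY) → CaseB1 pX pY) ∧
      ((Sset pX pY).Nonempty → e1 pX pY = e2 pX pY → CaseB2 pX pY) :=
  criterion_sym_general m hm pX pY hpX hpY hsym

end
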